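/- For all natural numbers i, j with j ≤ i and all integers k with k ≥ 1-j, Σ_{r=j}^{i} (-1)^{i-r} · C(r+k-1, r-j) · b_{i,r,k} = b_{i,j,0}. -/
import Mathlib


open Finset

noncomputable def msn (i j : ℕ) (k : ℝ) : ℝ :=
  ∑ r ∈ Finset.range (j + 1), (j.choose r : ℝ) * (-1 : ℝ) ^ (j - r) * ((r : ℝ) + k) ^ i

noncomputable def msn' (i j : ℕ) (x : ℝ) : ℝ :=
  ∑ s ∈ Finset.range (j + 1), (j.choose s : ℝ) * (-1 : ℝ) ^ s * ((s : ℝ) + x) ^ i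

lemma neg_one_pow_sub {m n : ℕ} (h : m ≤ n) : ((-1 : ℝ)) ^ (n - m) = (-1) ^ n * (-1) ^ m := by
  obtain ⟨t, rfl⟩ := Nat.exists_eq_add_of_le h
  rw [Nat.add_sub_cancel_left, pow_add]
  have h1 : ((-1 : ℝ)) ^ m * (-1) ^ m = 1 := by
    rw [← pow_add]
    exact Even.neg_one_pow ⟨m, rfl⟩
  linear_combination (-(-1 : ℝ) ^ t) * h1

lemma msn_eq_msn' (i j : ℕ) (x : ℝ) : msn i j x = (-1) ^ j * msn' i j x := by
  unfold msn msn'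
  rw [Finset.mul_sum]
  refine Finset.sum_congr rfl fun s hs => ?_
  have hs' : s ≤ j := Finset.mem_range_succ_iff.mp hs
  rw [neg_one_pow_sub hs']
  ring

lemma msn'_step (i r : ℕ) (x : ℝ) : msn' i r (x + 1) = msn' i r x - msn' i (r + 1) x := by
  set F : ℕ → ℝ := fun s => (r.choose s : ℝ) * (-1 : ℝ) ^ s * ((s : ℝ) + x) ^ i with hF
  have h1 : msn' i r x = ∑ s ∈ Finset.range (r + 1 + 1), F s := by
    rw [Finset.sum_range_succ]
    simp [msn', hF, Nat.choose_succ_self]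
  have h2 : ∑ s ∈ Finset.range (r + 1 + 1), F s = (∑ s ∈ Finset.range (r + 1), F (s + 1)) + F 0 :=
    Finset.sum_range_succ' F (r + 1)
  have h4 : msn' i r (x + 1)
      = ∑ s ∈ Finset.range (r + 1), (r.choose s : ℝ) * (-1 : ℝ) ^ s * (((s : ℝ) + 1) + x) ^ i := by
    unfold msn'
    refine Finset.sum_congr rfl fun s _ => ?_
    ring_nf
  have h3 : msn' i (r + 1) x
      = (∑ s ∈ Finset.range (r + 1),
          (F (s + 1) - (r.choose s : ℝ) * (-1 : ℝ) ^ s * (((s : ℝ) + 1) + x) ^ i)) + F 0 := by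
    unfold msn'
    rw [Finset.sum_range_succ' (fun s => (((r + 1).choose s : ℝ)) * (-1 : ℝ) ^ s * ((s : ℝ) + x) ^ i) (r + 1)]
    congr 1
    · refine Finset.sum_congr rfl fun s _ => ?_
      rw [Nat.choose_succ_succ]
      simp only [hF]
      push_cast
      ring
    · simp [hF]
  rw [Finset.sum_sub_distrib, ← h4] at h3
  rw [h2] at h1
  linarith

lemma msn'_vanish : ∀ i n : ℕ, ∀ x : ℝ, i < n → msn' i n x = 0 := by
  intro i
  induction i with
  | zero =>
    intro n x hn
    unfold msn'
    have h := add_pow (-1 : ℝ) 1 n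
    simp only [one_pow, mul_one, neg_add_cancel] at h
    have h0 : (0 : ℝ) ^ n = 0 := zero_pow (by omega)
    rw [h0] at h
    calc ∑ s ∈ Finset.range (n + 1), (n.choose s : ℝ) * (-1 : ℝ) ^ s * ((s : ℝ) + x) ^ 0
        = ∑ s ∈ Finset.range (n + 1), (-1 : ℝ) ^ s * (n.choose s : ℝ) := by
          refine Finset.sum_congr rfl fun s _ => ?_
          ring
      _ = 0 := h.symm
  | succ i ih =>
    intro n x hn
    obtain ⟨n', rfl⟩ : ∃ n', n = n' + 1 := ⟨n - 1, by omega⟩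
    have hin' : i < n' := by omega
    unfold msn'
    have hsplit : ∀ s : ℕ, ((s : ℝ) + x) ^ (i + 1)
        = (s : ℝ) * ((s : ℝ) + x) ^ i + x * ((s : ℝ) + x) ^ i := by
      intro s; ring
    calc ∑ s ∈ Finset.range (n' + 1 + 1), ((n' + 1).choose s : ℝ) * (-1 : ℝ) ^ s * ((s : ℝ) + x) ^ (i + 1)
        = (∑ s ∈ Finset.range (n' + 1 + 1), ((n' + 1).choose s : ℝ) * (-1 : ℝ) ^ s * ((s : ℝ) * ((s : ℝ) + x) ^ i))
          + x * msn' i (n' + 1) x := by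
          unfold msn'
          rw [Finset.mul_sum, ← Finset.sum_add_distrib]
          refine Finset.sum_congr rfl fun s _ => ?_
          rw [hsplit s]
          ring
      _ = (∑ s ∈ Finset.range (n' + 1 + 1), ((n' + 1).choose s : ℝ) * (-1 : ℝ) ^ s * ((s : ℝ) * ((s : ℝ) + x) ^ i)) := by
          rw [ih (n' + 1) x (by omega)]
          ring
      _ = ∑ s ∈ Finset.range (n' + 1),
            ((n' + 1).choose (s + 1) : ℝ) * (-1 : ℝ) ^ (s + 1) * (((s : ℝ) + 1) * (((s : ℝ) + 1) + x) ^ i) := by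
          rw [Finset.sum_range_succ'
            (fun s => ((n' + 1).choose s : ℝ) * (-1 : ℝ) ^ s * ((s : ℝ) * ((s : ℝ) + x) ^ i)) (n' + 1)]
          simp
      _ = ∑ s ∈ Finset.range (n' + 1),
            (-(n' + 1 : ℝ)) * ((n'.choose s : ℝ) * (-1 : ℝ) ^ s * ((s : ℝ) + (x + 1)) ^ i) := by
          refine Finset.sum_congr rfl fun s _ => ?_
          have hcs : ((n' + 1).choose (s + 1)) * (s + 1) = (n' + 1) * n'.choose s := by
            rw [← Nat.add_one_mul_choose_eq]
          have hcsr : (((n' + 1).choose (s + 1) : ℝ)) * ((s : ℝ) + 1) = ((n' : ℝ) + 1) * (n'.choose s : ℝ) := by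
            have := congrArg (fun t : ℕ => (t : ℝ)) hcs
            push_cast at this
            linarith
          have harg : ((s : ℝ) + 1) + x = (s : ℝ) + (x + 1) := by ring
          rw [harg]
          calc ((n' + 1).choose (s + 1) : ℝ) * (-1 : ℝ) ^ (s + 1) * (((s : ℝ) + 1) * ((s : ℝ) + (x + 1)) ^ i)
              = ((((n' + 1).choose (s + 1) : ℝ)) * ((s : ℝ) + 1)) * ((-1 : ℝ) ^ (s + 1) * ((s : ℝ) + (x + 1)) ^ i) := by ring
            _ = (((n' : ℝ) + 1) * (n'.choose s : ℝ)) * ((-1 : ℝ) ^ (s + 1) * ((s : ℝ) + (x + 1)) ^ i) := by rw [hcsr]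
            _ = (-(n' + 1 : ℝ)) * ((n'.choose s : ℝ) * (-1 : ℝ) ^ s * ((s : ℝ) + (x + 1)) ^ i) := by
                rw [pow_succ]; ring
      _ = (-(n' + 1 : ℝ)) * msn' i n' (x + 1) := by
          rw [msn', Finset.mul_sum]
      _ = 0 := by rw [ih n' (x + 1) hin']; ring

lemma msn'_reflect (i j : ℕ) : msn' i j (-(j : ℝ)) = (-1) ^ (i + j) * msn' i j 0 := by
  unfold msn'
  rw [← Finset.sum_range_reflect]
  rw [Finset.mul_sum]
  refine Finset.sum_congr rfl fun s hs => ?_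
  have hs' : s ≤ j := Finset.mem_range_succ_iff.mp hs
  have h1 : j + 1 - 1 - s = j - s := by omega
  rw [h1]
  have h2 : j.choose (j - s) = j.choose s := Nat.choose_symm hs'
  rw [h2]
  have h3 : ((j - s : ℕ) : ℝ) = (j : ℝ) - (s : ℝ) := by
    push_cast [hs']
    ring
  rw [h3, neg_one_pow_sub hs']
  have h4 : (j : ℝ) - (s : ℝ) + -(j : ℝ) = -((s : ℝ)) := by ring
  rw [h4]
  have h5 : (-((s : ℝ))) ^ i = (-1 : ℝ) ^ i * (s : ℝ) ^ i := by
    rw [neg_pow]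
  rw [h5, pow_add]
  ring

lemma telescope (i j : ℕ) (hj : j ≤ i) (x : ℝ) :
    ∑ m ∈ Finset.range (i - j + 1), msn' i (j + m) (x + 1) = msn' i j x := by
  have h : ∀ m ∈ Finset.range (i - j + 1),
      msn' i (j + m) (x + 1) = msn' i (j + m) x - msn' i (j + (m + 1)) x := by
    intro m _
    rw [msn'_step]
    congr 2
  rw [Finset.sum_congr rfl h, Finset.sum_range_sub' (fun m => msn' i (j + m) x)]
  have hend : j + (i - j + 1) = i + 1 := by omega
  rw [hend, msn'_vanish i (i + 1) x (by omega)]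
  simp

lemma key (i j : ℕ) (hj : j ≤ i) : ∀ k' : ℕ,
    ∑ m ∈ Finset.range (i - j + 1), (((m + k').choose k' : ℕ) : ℝ) * msn' i (j + m) ((k' : ℝ) + 1 - j)
      = (-1) ^ (i + j) * msn' i j 0 := by
  intro k'
  induction k' with
  | zero =>
    have h : ∀ m ∈ Finset.range (i - j + 1),
        (((m + 0).choose 0 : ℕ) : ℝ) * msn' i (j + m) ((0 : ℕ) + 1 - (j : ℝ))
        = msn' i (j + m) ((-(j : ℝ)) + 1) := by
      intro m _
      simp only [Nat.choose_zero_right, Nat.cast_one, one_mul, Nat.cast_zero]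
      ring_nf
    rw [Finset.sum_congr rfl h, telescope i j hj (-(j : ℝ)), msn'_reflect]
  | succ k' ih =>
    set x : ℝ := (k' : ℝ) + 1 - j with hx
    have hx1 : ((k' + 1 : ℕ) : ℝ) + 1 - j = x + 1 := by push_cast; ring
    rw [hx1]
    rw [← ih]
    have hterm : ∀ m ∈ Finset.range (i - j + 1),
        (((m + (k' + 1)).choose (k' + 1) : ℕ) : ℝ) * msn' i (j + m) (x + 1)
        = (((m + k').choose k' : ℕ) : ℝ) * msn' i (j + m) x
          + ((((m + k').choose (k' + 1) : ℕ) : ℝ) * msn' i (j + m) x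
             - (((m + 1 + k').choose (k' + 1) : ℕ) : ℝ) * msn' i (j + (m + 1)) x) := by
      intro m _
      have hc : (m + (k' + 1)).choose (k' + 1) = (m + k').choose k' + (m + k').choose (k' + 1) := by
        have : m + (k' + 1) = (m + k') + 1 := by omega
        rw [this, Nat.choose_succ_succ]
      have hstep : msn' i (j + m) (x + 1) = msn' i (j + m) x - msn' i (j + (m + 1)) x := by
        rw [msn'_step]
        congr 2
      have hm1 : m + 1 + k' = m + (k' + 1) := by omega
      rw [hstep, hc, hm1, hc]
      push_cast
      ring
    rw [Finset.sum_congr rfl hterm, Finset.sum_add_distrib]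
    have htel : ∑ m ∈ Finset.range (i - j + 1),
        ((((m + k').choose (k' + 1) : ℕ) : ℝ) * msn' i (j + m) x
          - (((m + 1 + k').choose (k' + 1) : ℕ) : ℝ) * msn' i (j + (m + 1)) x) = 0 := by
      rw [Finset.sum_range_sub' (fun m => (((m + k').choose (k' + 1) : ℕ) : ℝ) * msn' i (j + m) x)]
      have h0 : (0 + k').choose (k' + 1) = 0 := by
        rw [Nat.zero_add]
        exact Nat.choose_succ_self k'
      have hend : j + (i - j + 1) = i + 1 := by omega
      rw [h0, hend, msn'_vanish i (i + 1) x (by omega)]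
      simp
    rw [htel]
    ring

theorem stmt (i j : ℕ) (hj : j ≤ i) (k : ℤ) (hk : 1 - (j : ℤ) ≤ k) : ∑ r ∈ Finset.Icc j i, (-1 : ℝ) ^ (i - r) * (((r + k - 1).toNat.choose (r - j) : ℕ) : ℝ) * msn i r (k : ℝ) = msn i j 0 := by
  set k' : ℕ := (k + j - 1).toNat with hk'def
  have hk' : (k' : ℤ) = k + j - 1 := Int.toNat_of_nonneg (by omega)
  have hkr : (k : ℝ) = (k' : ℝ) + 1 - j := by
    have := congrArg (fun t : ℤ => (t : ℝ)) hk'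
    push_cast at this
    linarith
  rw [show Finset.Icc j i = Finset.Ico j (i + 1) from by rw [Finset.Ico_add_one_right_eq_Icc],
    Finset.sum_Ico_eq_sum_range]
  have hrange : i + 1 - j = i - j + 1 := by omega
  rw [hrange]
  have hterm : ∀ m ∈ Finset.range (i - j + 1),
      (-1 : ℝ) ^ (i - (j + m)) * ((((j + m : ℕ) : ℤ) + k - 1).toNat.choose (j + m - j) : ℝ) * msn i (j + m) (k : ℝ)
      = (-1 : ℝ) ^ i * ((((m + k').choose k' : ℕ) : ℝ) * msn' i (j + m) ((k' : ℝ) + 1 - j)) := by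
    intro m hm
    have hmle : m ≤ i - j := Finset.mem_range_succ_iff.mp hm
    have hjm : j + m ≤ i := by omega
    have htn : (((j + m : ℕ) : ℤ) + k - 1).toNat = m + k' := by
      have h9 : ((j + m : ℕ) : ℤ) + k - 1 = ((m + k' : ℕ) : ℤ) := by push_cast [hk']; ring
      rw [h9, Int.toNat_natCast]
    have hsub : j + m - j = m := by omega
    have hchoose : (m + k').choose m = (m + k').choose k' := by
      have h1 := Nat.choose_symm (Nat.le_add_left k' m)
      rwa [Nat.add_sub_cancel] at h1
    rw [neg_one_pow_sub hjm, msn_eq_msn' i (j + m), hkr, htn, hsub, hchoose]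
    have hsq : ((-1 : ℝ)) ^ (j + m) * (-1) ^ (j + m) = 1 := by
      rw [← pow_add]
      exact Even.neg_one_pow ⟨j + m, rfl⟩
    calc (-1 : ℝ) ^ i * (-1 : ℝ) ^ (j + m) * (((m + k').choose k' : ℕ) : ℝ) * ((-1 : ℝ) ^ (j + m) * msn' i (j + m) ((k' : ℝ) + 1 - j))
        = ((-1 : ℝ) ^ (j + m) * (-1) ^ (j + m)) * ((-1 : ℝ) ^ i * ((((m + k').choose k' : ℕ) : ℝ) * msn' i (j + m) ((k' : ℝ) + 1 - j))) := by ring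
      _ = (-1 : ℝ) ^ i * ((((m + k').choose k' : ℕ) : ℝ) * msn' i (j + m) ((k' : ℝ) + 1 - j)) := by rw [hsq]; ring
  rw [Finset.sum_congr rfl hterm, ← Finset.mul_sum, key i j hj k', msn_eq_msn' i j 0]
  rw [pow_add]
  have hsq : ((-1 : ℝ)) ^ i * (-1) ^ i = 1 := by
    rw [← pow_add]
    exact Even.neg_one_pow ⟨i, rfl⟩
  calc (-1 : ℝ) ^ i * ((-1 : ℝ) ^ i * (-1 : ℝ) ^ j * msn' i j 0)
      = ((-1 : ℝ) ^ i * (-1) ^ i) * ((-1 : ℝ) ^ j * msn' i j 0) := by ring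
    _ = (-1 : ℝ) ^ j * msn' i j 0 := by rw [hsq]; ring
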